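/- Let Γ be a finitely generated group. Suppose Γ has a subgroup K of finite index and there is a surjective group homomorphism from K onto a group Q which is finitely generated and has uniform exponential growth. Then Γ has uniform exponential growth. -/

import Mathlib

open Subgroup

/-- The ball of radius `n`: elements expressible as a product of at most `n`
elements of `S ∪ S⁻¹`. -/
def ball {G : Type*} [Group G] (S : Finset G) (n : ℕ) : Set G :=
  {g | ∃ l : List G, l.length ≤ n ∧ (∀ x ∈ l, x ∈ S ∨ x⁻¹ ∈ S) ∧ l.prod = g}

/-- The growth rate `β(S,Γ) = inf_{n ≥ 1} β_n(S,Γ)^(1/n)`. -/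
noncomputable def growthRate {G : Type*} [Group G] (S : Finset G) : ℝ :=
  ⨅ n : ℕ, (Nat.card (ball S (n + 1)) : ℝ) ^ (((n : ℝ) + 1)⁻¹)

/-- Word length with respect to `S`. -/
noncomputable def wordLength {G : Type*} [Group G] (S : Finset G) (g : G) : ℕ :=
  sInf {n : ℕ | g ∈ ball S n}

/-- `a` and `b` generate a free semigroup. -/
def GeneratesFreeSemigroup {G : Type*} [Group G] (a b : G) : Prop :=
  Function.Injective
    (FreeSemigroup.lift (fun x : Bool => if x then a else b) : FreeSemigroup Bool →ₙ* G)

/-- `β(G) = inf_S β(S,G)` over all finite generating sets. -/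
noncomputable def groupGrowthRate (G : Type*) [Group G] : ℝ :=
  sInf {r : ℝ | ∃ S : Finset G, Subgroup.closure (S : Set G) = ⊤ ∧ r = growthRate S}

/-- Uniform exponential growth: `inf_S β(S,G) > 1`. -/
def UniformExponentialGrowth (G : Type*) [Group G] : Prop :=
  1 < groupGrowthRate G

/-- Exponential growth: `β(S,G) > 1` for some finite generating set. -/
def ExponentialGrowth (G : Type*) [Group G] : Prop :=
  ∃ S : Finset G, Subgroup.closure (S : Set G) = ⊤ ∧ 1 < growthRate S

/-- Polynomial growth. -/
def PolynomialGrowth (G : Type*) [Group G] : Prop :=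
  ∃ (S : Finset G) (C : ℝ) (d : ℕ), Subgroup.closure (S : Set G) = ⊤ ∧
    ∀ n : ℕ, 1 ≤ n → (Nat.card (ball S n) : ℝ) ≤ C * (n : ℝ) ^ d

/-! Fix a finite generating set `S` of `G` and put `d = [G : K]`. Among the `d + 1` prefixes of a
word of length at most `d`, two lie in the same right coset of `K`, which gives
`B_d(S) ⊆ (K ∩ B_{2d-1}(S)) · B_{d-1}(S)`; hence `T = K ∩ B_{2d-1}(S)` generates `K`.
Then `f(T)` generates `Q` and `|B_n(f T)| ≤ |B_n(T)| ≤ |B_{(2d-1)n}(S)|`, so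
`β(S, G) ≥ β(f T, Q)^{1/(2d-1)} ≥ β(Q)^{1/(2d-1)} > 1`, a bound independent of `S`. -/

open Pointwise

section Ball

variable {G H : Type*} [Group G] [Group H]

lemma one_mem_ball (S : Finset G) (n : ℕ) : (1 : G) ∈ ball S n :=
  ⟨[], by simp, by simp, rfl⟩

lemma ball_zero (S : Finset G) : ball S 0 = 1 := by
  ext g
  simp only [ball, Nat.le_zero, List.length_eq_zero_iff, Set.mem_one]
  constructor
  · rintro ⟨l, rfl, -, rfl⟩; rfl
  · rintro rfl; exact ⟨[], rfl, by simp, rfl⟩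

lemma ball_succ (S : Finset G) (n : ℕ) :
    ball S (n + 1) = insert 1 ((S : Set G) ∪ (S : Set G)⁻¹) * ball S n := by
  ext g
  constructor
  · rintro ⟨_ | ⟨x, l⟩, hl, hx, rfl⟩
    · exact ⟨1, Set.mem_insert _ _, 1, one_mem_ball S n, mul_one 1⟩
    · refine ⟨x, Or.inr ?_, l.prod,
        ⟨l, by simpa using hl, fun y hy => hx y (by simp [hy]), rfl⟩, List.prod_cons.symm⟩
      simpa using hx x (by simp)
  · rintro ⟨a, ha, _, ⟨l, hl, hx, rfl⟩, rfl⟩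
    obtain rfl | ha := ha
    · exact ⟨l, hl.trans n.le_succ, hx, (one_mul _).symm⟩
    · refine ⟨a :: l, by simpa using hl, ?_, List.prod_cons⟩
      simp only [List.mem_cons, forall_eq_or_imp]
      exact ⟨by simpa using ha, hx⟩

lemma ball_one (S : Finset G) : ball S 1 = insert 1 ((S : Set G) ∪ (S : Set G)⁻¹) := by
  rw [ball_succ, ball_zero, mul_one]

lemma ball_eq_pow (S : Finset G) (n : ℕ) : ball S n = ball S 1 ^ n := by
  induction n with
  | zero => rw [ball_zero, pow_zero]
  | succ n ih => rw [ball_succ, ih, ← ball_one, pow_succ']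

lemma ball_add_eq_mul (S : Finset G) (m n : ℕ) : ball S (m + n) = ball S m * ball S n := by
  rw [ball_eq_pow S (m + n), ball_eq_pow S m, ball_eq_pow S n, pow_add]

lemma ball_mul_eq_pow (S : Finset G) (m n : ℕ) : ball S (m * n) = ball S m ^ n := by
  rw [ball_eq_pow S (m * n), ball_eq_pow S m, pow_mul]

lemma ball_mono (S : Finset G) {m n : ℕ} (h : m ≤ n) : ball S m ⊆ ball S n := by
  rw [ball_eq_pow S m, ball_eq_pow S n]
  exact Set.pow_subset_pow_right (one_mem_ball S 1) h

lemma ball_inv (S : Finset G) (n : ℕ) : (ball S n)⁻¹ = ball S n := by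
  have h1 : (ball S 1)⁻¹ = ball S 1 := by
    rw [ball_one, Set.inv_insert, inv_one, Set.union_inv, inv_inv, Set.union_comm]
  rw [ball_eq_pow, ← inv_pow, h1]

lemma ball_finite (S : Finset G) (n : ℕ) : (ball S n).Finite := by
  induction n with
  | zero => rw [ball_zero]; exact Set.finite_one
  | succ n ih =>
    rw [ball_succ]
    exact ((S.finite_toSet.union S.finite_toSet.inv).insert 1).mul ih

lemma exists_mem_ball {S : Finset G} (hS : Subgroup.closure (S : Set G) = ⊤) (g : G) :
    ∃ n, g ∈ ball S n := by
  induction (hS ▸ Subgroup.mem_top g : g ∈ Subgroup.closure (S : Set G))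
    using Subgroup.closure_induction with
  | mem x hx => exact ⟨1, by rw [ball_one]; exact Or.inr (Or.inl hx)⟩
  | one => exact ⟨0, one_mem_ball S 0⟩
  | mul x y _ _ hx hy =>
    obtain ⟨m, hm⟩ := hx
    obtain ⟨n, hn⟩ := hy
    exact ⟨m + n, ball_add_eq_mul S m n ▸ Set.mul_mem_mul hm hn⟩
  | inv x _ hx =>
    obtain ⟨n, hn⟩ := hx
    exact ⟨n, ball_inv S n ▸ Set.inv_mem_inv.2 hn⟩

lemma image_ball [DecidableEq H] (f : G →* H) (S : Finset G) (n : ℕ) :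
    f '' ball S n = ball (S.image f) n := by
  have h1 : f '' ball S 1 = ball (S.image f) 1 := by
    simp only [ball_one, Set.image_insert_eq, map_one, Set.image_union, Set.image_inv,
      Finset.coe_image]
  rw [ball_eq_pow, Set.image_pow, h1, ← ball_eq_pow]

lemma ball_subset_ball_mul {S T : Finset G} {L : ℕ} (hT : (T : Set G) ⊆ ball S L) (n : ℕ) :
    ball T n ⊆ ball S (L * n) := by
  have h1 : ball T 1 ⊆ ball S L := by
    rw [ball_one]
    refine Set.insert_subset (one_mem_ball S L) (Set.union_subset hT ?_)
    rw [← ball_inv S L]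
    exact Set.inv_subset_inv.2 hT
  rw [ball_eq_pow T, ball_mul_eq_pow]
  exact Set.pow_subset_pow_left h1

end Ball

section Cardinality

variable {G H : Type*} [Group G] [Group H]

lemma one_le_natCard_ball (S : Finset G) (n : ℕ) : 1 ≤ Nat.card (ball S n) :=
  have := (ball_finite S n).to_subtype
  Nat.card_pos_iff.2 ⟨⟨1, one_mem_ball S n⟩, this⟩

lemma natCard_ball_mul_le_pow (S : Finset G) (m n : ℕ) :
    Nat.card (ball S (m * n)) ≤ Nat.card (ball S m) ^ n := by
  induction n with
  | zero => simp [ball_zero]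
  | succ n ih =>
    rw [Nat.mul_succ, ball_add_eq_mul, pow_succ]
    exact Set.natCard_mul_le.trans (Nat.mul_le_mul_right _ ih)

lemma natCard_ball_image_le [DecidableEq H] (f : G →* H) (S : Finset G) (n : ℕ) :
    Nat.card (ball (S.image f) n) ≤ Nat.card (ball S n) := by
  rw [← image_ball]
  exact Nat.card_image_le (ball_finite S n)

lemma natCard_ball_le_of_injective {φ : H →* G} (hφ : Function.Injective φ) {T : Finset H}
    {S : Finset G} {L : ℕ} (hT : ∀ t ∈ T, φ t ∈ ball S L) (n : ℕ) :
    Nat.card (ball T n) ≤ Nat.card (ball S (L * n)) := by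
  classical
  have hφT : ((T.image φ : Finset G) : Set G) ⊆ ball S L := by
    simpa [Set.subset_def] using hT
  calc Nat.card (ball T n) = Nat.card (φ '' ball T n) := (Nat.card_image_of_injective hφ _).symm
    _ = Nat.card (ball (T.image φ) n) := by rw [image_ball]
    _ ≤ Nat.card (ball S (L * n)) :=
      Nat.card_mono (ball_finite S _) (ball_subset_ball_mul hφT n)

end Cardinality

section GrowthRate

variable {G H : Type*} [Group G] [Group H]

lemma growthRate_nonneg (S : Finset G) : 0 ≤ growthRate S :=
  le_ciInf fun _ => Real.rpow_nonneg (Nat.cast_nonneg _) _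

lemma growthRate_pow_le_natCard_ball (S : Finset G) (n : ℕ) :
    growthRate S ^ n ≤ Nat.card (ball S n) := by
  cases n with
  | zero => simpa using one_le_natCard_ball S 0
  | succ n =>
    have hbdd : BddBelow (Set.range fun k : ℕ =>
        (Nat.card (ball S (k + 1)) : ℝ) ^ ((k : ℝ) + 1)⁻¹) :=
      ⟨0, by rintro _ ⟨k, rfl⟩; exact Real.rpow_nonneg (Nat.cast_nonneg _) _⟩
    have h : growthRate S ≤ _ := ciInf_le hbdd n
    rw [Real.le_rpow_inv_iff_of_pos (growthRate_nonneg S) (Nat.cast_nonneg _) (by positivity)] at h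
    exact_mod_cast h

lemma le_growthRate_of_pow_le (S : Finset G) {c : ℝ} (hc : 0 ≤ c)
    (h : ∀ n : ℕ, c ^ n ≤ Nat.card (ball S n)) : c ≤ growthRate S :=
  le_ciInf fun n =>
    (Real.le_rpow_inv_iff_of_pos hc (Nat.cast_nonneg _) (by positivity)).2
      (by exact_mod_cast h (n + 1))

lemma one_le_growthRate (S : Finset G) : 1 ≤ growthRate S :=
  le_growthRate_of_pow_le S zero_le_one fun n => by
    simpa using (Nat.one_le_cast.2 (one_le_natCard_ball S n) : (1 : ℝ) ≤ _)

lemma growthRate_rpow_inv_le {U : Finset H} {S : Finset G} {L : ℕ} (hL : L ≠ 0)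
    (h : ∀ n, Nat.card (ball U n) ≤ Nat.card (ball S (L * n))) :
    growthRate U ^ (L⁻¹ : ℝ) ≤ growthRate S := by
  have hU := growthRate_nonneg U
  refine le_growthRate_of_pow_le S (Real.rpow_nonneg hU _) fun n => ?_
  refine le_of_pow_le_pow_left₀ hL (Nat.cast_nonneg _) ?_
  calc ((growthRate U ^ (L⁻¹ : ℝ)) ^ n) ^ L = growthRate U ^ n := by
        rw [← pow_mul, mul_comm, pow_mul, Real.rpow_inv_natCast_pow hU hL]
    _ ≤ Nat.card (ball U n) := growthRate_pow_le_natCard_ball U n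
    _ ≤ Nat.card (ball S (L * n)) := by exact_mod_cast h n
    _ ≤ (Nat.card (ball S n) : ℝ) ^ L := by
        rw [mul_comm]; exact_mod_cast natCard_ball_mul_le_pow S n L

lemma groupGrowthRate_le_growthRate {S : Finset G} (hS : Subgroup.closure (S : Set G) = ⊤) :
    groupGrowthRate G ≤ growthRate S :=
  csInf_le ⟨1, by rintro _ ⟨T, -, rfl⟩; exact one_le_growthRate T⟩ ⟨S, hS, rfl⟩

lemma le_groupGrowthRate (hG : Group.FG G) {c : ℝ}
    (h : ∀ S : Finset G, Subgroup.closure (S : Set G) = ⊤ → c ≤ growthRate S) :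
    c ≤ groupGrowthRate G := by
  obtain ⟨S, hS⟩ := hG.out
  exact le_csInf ⟨_, S, hS, rfl⟩ (by rintro _ ⟨T, hT, rfl⟩; exact h T hT)

end GrowthRate

section FiniteIndex

variable {G : Type*} [Group G] (K : Subgroup G) (S : Finset G)

lemma ball_index_subset (hK : K.index ≠ 0) :
    ball S K.index ⊆ ((K : Set G) ∩ ball S (2 * K.index - 1)) * ball S (K.index - 1) := by
  rintro _ ⟨l, hl, hlS, rfl⟩
  set d := K.index
  have hprefix : ∀ i, (l.take i).prod ∈ ball S i := fun i =>
    ⟨l.take i, by simp, fun x hx => hlS x (List.mem_of_mem_take hx), rfl⟩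
  have hsuffix : ∀ j, (l.drop j).prod ∈ ball S (d - j) := fun j =>
    ⟨l.drop j, by simp; omega, fun x hx => hlS x (List.mem_of_mem_drop hx), rfl⟩
  have : K.FiniteIndex := ⟨hK⟩
  have := Fintype.ofFinite (G ⧸ K)
  -- two of the `d + 1` prefixes lie in the same right coset of `K`
  obtain ⟨i, j, hne, hij⟩ := Fintype.exists_ne_map_eq_of_card_lt
    (fun i : Fin (d + 1) => ((((l.take i).prod)⁻¹ : G) : G ⧸ K))
    (by rw [Fintype.card_fin, ← Nat.card_eq_fintype_card, ← K.index_eq_card]; omega)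
  wlog hlt : i < j generalizing i j
  · exact this j i hne.symm hij.symm (lt_of_le_of_ne (not_lt.1 hlt) hne.symm)
  have hkK : (l.take j).prod * ((l.take i).prod)⁻¹ ∈ K := by
    simpa using K.inv_mem (QuotientGroup.eq.1 hij)
  refine ⟨(l.take j).prod * ((l.take i).prod)⁻¹, ⟨hkK, ?_⟩,
    (l.take i).prod * (l.drop j).prod, ?_, ?_⟩
  · refine ball_mono S (by omega) (ball_add_eq_mul S j i ▸ Set.mul_mem_mul (hprefix j) ?_)
    exact ball_inv S i ▸ Set.inv_mem_inv.2 (hprefix i)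
  · exact ball_mono S (by omega) (ball_add_eq_mul S i (d - j) ▸
      Set.mul_mem_mul (hprefix i) (hsuffix j))
  · simp [mul_assoc, List.prod_take_mul_prod_drop]

lemma ball_subset_closure_mul (hK : K.index ≠ 0) (n : ℕ) :
    ball S n ⊆ (Subgroup.closure ((K : Set G) ∩ ball S (2 * K.index - 1)) : Set G) *
      ball S (K.index - 1) := by
  set H := Subgroup.closure ((K : Set G) ∩ ball S (2 * K.index - 1))
  have hHH : (H : Set G) * H ⊆ H := Set.mul_subset_iff.2 fun _ ha _ hb => H.mul_mem ha hb
  induction n with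
  | zero =>
    rw [ball_zero, Set.one_subset]
    exact ⟨1, H.one_mem, 1, one_mem_ball S _, one_mul 1⟩
  | succ n ih =>
    calc ball S (n + 1) = ball S n * ball S 1 := ball_add_eq_mul S n 1
      _ ⊆ H * ball S (K.index - 1) * ball S 1 := Set.mul_subset_mul_right ih
      _ = H * ball S K.index := by
        rw [mul_assoc, ← ball_add_eq_mul, Nat.sub_add_cancel (Nat.pos_of_ne_zero hK)]
      _ ⊆ H * (((K : Set G) ∩ ball S (2 * K.index - 1)) * ball S (K.index - 1)) :=
        Set.mul_subset_mul_left (ball_index_subset K S hK)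
      _ ⊆ H * H * ball S (K.index - 1) := by
        rw [← mul_assoc]
        exact Set.mul_subset_mul_right (Set.mul_subset_mul_left Subgroup.subset_closure)
      _ ⊆ H * ball S (K.index - 1) := Set.mul_subset_mul_right hHH

lemma closure_inter_ball_eq (hK : K.index ≠ 0) (hS : Subgroup.closure (S : Set G) = ⊤) :
    Subgroup.closure ((K : Set G) ∩ ball S (2 * K.index - 1)) = K := by
  set H := Subgroup.closure ((K : Set G) ∩ ball S (2 * K.index - 1))
  have hHK : H ≤ K := Subgroup.closure_le _ |>.2 Set.inter_subset_left
  refine le_antisymm hHK fun g hg => ?_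
  obtain ⟨n, hn⟩ := exists_mem_ball hS g
  obtain ⟨h, hH, r, hr, rfl⟩ := ball_subset_closure_mul K S hK n hn
  have hrK : r ∈ K := by simpa using K.mul_mem (K.inv_mem (hHK hH)) hg
  exact H.mul_mem hH (Subgroup.subset_closure ⟨hrK, ball_mono S (by omega) hr⟩)

lemma exists_finset_closure_eq_top_subset_ball (hK : K.index ≠ 0)
    (hS : Subgroup.closure (S : Set G) = ⊤) :
    ∃ T : Finset K, Subgroup.closure (T : Set K) = ⊤ ∧
      ∀ t ∈ T, (t : G) ∈ ball S (2 * K.index - 1) := by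
  have hfin := (ball_finite S (2 * K.index - 1)).preimage
    (f := ((↑) : K → G)) Subtype.val_injective.injOn
  refine ⟨hfin.toFinset, ?_, fun t ht => by simpa using ht⟩
  apply Subgroup.map_injective K.subtype_injective
  rw [MonoidHom.map_closure, Set.Finite.coe_toFinset, ← MonoidHom.range_eq_map, K.range_subtype,
    K.coe_subtype, Set.image_preimage_eq_inter_range, Subtype.range_coe_subtype, Set.inter_comm]
  exact closure_inter_ball_eq K S hK hS

end FiniteIndex

theorem uniform_growth_of_quotient_of_finite_index_subgroup_general
    {G Q : Type*} [Group G] [Group Q] (hfg : Group.FG G)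
    (K : Subgroup G) (hK : K.index ≠ 0)
    (f : ↥K →* Q) (hf : Function.Surjective f)
    (hQ : UniformExponentialGrowth Q) :
    UniformExponentialGrowth G := by
  classical
  set L := 2 * K.index - 1
  have hL : 0 < L := by omega
  have hQ0 : 0 ≤ groupGrowthRate Q := zero_le_one.trans hQ.le
  refine (Real.one_lt_rpow hQ (z := (L : ℝ)⁻¹) (by positivity)).trans_le
    (le_groupGrowthRate hfg fun S hS => ?_)
  obtain ⟨T, hT, hTS⟩ := exists_finset_closure_eq_top_subset_ball K S hK hS
  have hU : Subgroup.closure ((T.image f : Finset Q) : Set Q) = ⊤ := by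
    rw [Finset.coe_image, ← MonoidHom.map_closure, hT, ← MonoidHom.range_eq_map,
      MonoidHom.range_eq_top.2 hf]
  calc groupGrowthRate Q ^ (L⁻¹ : ℝ) ≤ growthRate (T.image f) ^ (L⁻¹ : ℝ) :=
        Real.rpow_le_rpow hQ0 (groupGrowthRate_le_growthRate hU) (by positivity)
    _ ≤ growthRate S := growthRate_rpow_inv_le hL.ne' fun n =>
        (natCard_ball_image_le f T n).trans (natCard_ball_le_of_injective K.subtype_injective hTS n)

/-- uniform exponential growth of an image of a finite-index subgroup
passes to the group. -/
theorem uniform_growth_of_quotient_of_finite_index_subgroup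
    {G Q : Type*} [Group G] [Group Q] (hfg : Group.FG G)
    (K : Subgroup G) (hK : K.index ≠ 0)
    (f : ↥K →* Q) (hf : Function.Surjective f)
    (hQfg : Group.FG Q) (hQ : UniformExponentialGrowth Q) :
    UniformExponentialGrowth G :=
  uniform_growth_of_quotient_of_finite_index_subgroup_general hfg K hK f hf hQ
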